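/- arXiv:2201.06298 — 3 statements merged into one kernel-verified Lean document; each statement's English description precedes it below -/
import Mathlib

section
/- Let Γ : X → ℝ^m be a set-valued map on a compact metric space X with nonempty convex values contained in a compact ball, which is upper hemicontinuous. Then for every ε > 0 there exists a Lipschitz continuous single-valued function g : X → ℝ^m whose graph satisfies Graph(g) ⊂ B(Graph(Γ), ε), i.e., g is a Lipschitz ε-selection of Γ. -/
/-!
Pick for every `x₀` a radius `δ x₀ ≤ ε` of upper hemicontinuity, so that `Γ x` lies in the
`ε / 2`-thickening of `Γ x₀` whenever `dist x x₀ < δ x₀`, and cover `X` by finitely many balls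
`ball i (δ i / 2)`. With tent functions on these balls as weights, `g x` is the center of mass of
points `y i ∈ Γ i`. Among the balls containing `x`, the one with the largest radius, centred at
`j`, has all other active centres within `δ j` of `j`; so every active `y i` lies in the convex
`ε / 2`-thickening of `Γ j`, and so does `g x`. The weights are Lipschitz with a nonvanishing sum,
so `g` is locally Lipschitz, hence Lipschitz on the compact space `X`.
-/

open Metric Finset

section LocallyLipschitz

variable {X Y E ι : Type*} [PseudoMetricSpace X] [PseudoMetricSpace Y] [SeminormedAddCommGroup E]

theorem LocallyLipschitz.exists_lipschitzWith [CompactSpace X] {f : X → Y}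
    (hf : LocallyLipschitz f) : ∃ K, LipschitzWith K f := by
  obtain ⟨K, hK⟩ := (hf.locallyLipschitzOn (s := Set.univ)).exists_lipschitzOnWith_of_compact
    isCompact_univ
  exact ⟨K, lipschitzOnWith_univ.1 hK⟩

theorem LocallyLipschitz.finset_sum {t : Finset ι} {f : ι → X → E}
    (hf : ∀ i ∈ t, LocallyLipschitz (f i)) : LocallyLipschitz fun x => ∑ i ∈ t, f i x := by
  classical
  induction t using Finset.induction_on with
  | empty => simpa using LocallyLipschitz.const (0 : E)
  | insert i t hi ih =>
    simp_rw [sum_insert hi]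
    exact (hf i (mem_insert_self i t)).add (ih fun j hj => hf j (mem_insert_of_mem hj))

variable {F : Type*} [NormedAddCommGroup F] [NormedSpace ℝ F]

theorem LocallyLipschitz.smul_const {f : X → ℝ} (hf : LocallyLipschitz f) (v : F) :
    LocallyLipschitz fun x => f x • v :=
  (contDiff_id.smul contDiff_const : ContDiff ℝ 1 fun a : ℝ => a • v).locallyLipschitz.comp hf

theorem LocallyLipschitz.inv_smul {f : X → ℝ} {G : X → F} (hf : LocallyLipschitz f)
    (hG : LocallyLipschitz G) (hf₀ : ∀ x, f x ≠ 0) : LocallyLipschitz fun x => (f x)⁻¹ • G x := by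
  intro x
  have hφ : ContDiffAt ℝ 1 (fun p : ℝ × F => p.1⁻¹ • p.2) (f x, G x) :=
    (contDiffAt_fst.inv (hf₀ x)).smul contDiffAt_snd
  obtain ⟨K, s, hs, hφs⟩ := hφ.exists_lipschitzOnWith
  obtain ⟨K', u, hu, hfGu⟩ := hf.prodMk hG x
  exact ⟨K * K', u ∩ (fun y => (f y, G y)) ⁻¹' s,
    Filter.inter_mem hu ((hf.prodMk hG).continuous.continuousAt hs),
    hφs.comp (hfGu.mono Set.inter_subset_left) fun _ hy => hy.2⟩

theorem LocallyLipschitz.centerMass {t : Finset ι} {w : ι → X → ℝ}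
    (hw : ∀ i ∈ t, LocallyLipschitz (w i)) (hsum : ∀ x, ∑ i ∈ t, w i x ≠ 0) (z : ι → F) :
    LocallyLipschitz fun x => t.centerMass (fun i => w i x) z :=
  (LocallyLipschitz.finset_sum hw).inv_smul
    (LocallyLipschitz.finset_sum fun i hi => (hw i hi).smul_const (z i)) hsum

end LocallyLipschitz

theorem Convex.centerMass_mem_of_ne_zero {E ι : Type*} [AddCommGroup E] [Module ℝ E] {s : Set E}
    (hs : Convex ℝ s) {t : Finset ι} {w : ι → ℝ} {z : ι → E} (hw₀ : ∀ i ∈ t, 0 ≤ w i)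
    (hpos : 0 < ∑ i ∈ t, w i) (hz : ∀ i ∈ t, w i ≠ 0 → z i ∈ s) : t.centerMass w z ∈ s := by
  classical
  rw [← centerMass_filter_ne_zero]
  refine hs.centerMass_mem (fun i hi => hw₀ i (mem_filter.1 hi).1) ?_
    fun i hi => hz i (mem_filter.1 hi).1 (mem_filter.1 hi).2
  rwa [sum_filter_ne_zero]

section Balls

variable {X : Type*} [PseudoMetricSpace X]

def tent (c : X) (r : ℝ) (x : X) : ℝ := max (r - dist x c) 0

theorem tent_nonneg (c : X) (r : ℝ) (x : X) : 0 ≤ tent c r x := le_max_right _ _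

theorem tent_ne_zero_iff {c : X} {r : ℝ} {x : X} : tent c r x ≠ 0 ↔ dist x c < r := by
  simp only [tent, ne_eq, max_eq_right_iff, not_le, sub_pos]

theorem lipschitzWith_tent (c : X) (r : ℝ) : LipschitzWith 1 (tent c r) := by
  have h := ((LipschitzWith.const r).sub (LipschitzWith.dist_left c)).max_const 0
  rwa [zero_add] at h

theorem sum_tent_pos {t : Finset X} {r : X → ℝ} {x : X} (hx : ∃ i ∈ t, dist x i < r i) :
    0 < ∑ i ∈ t, tent i (r i) x := by
  obtain ⟨i, hi, hxi⟩ := hx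
  exact sum_pos' (fun j _ => tent_nonneg j (r j) x)
    ⟨i, hi, (tent_nonneg i _ x).lt_of_ne' (tent_ne_zero_iff.2 hxi)⟩

theorem exists_ball_of_max_radius {t : Finset X} {r : X → ℝ} {x : X}
    (hx : ∃ i ∈ t, dist x i < r i) :
    ∃ j ∈ t, dist x j < r j ∧ ∀ i ∈ t, dist x i < r i → dist i j < 2 * r j := by
  classical
  obtain ⟨i₀, hi₀, hxi₀⟩ := hx
  obtain ⟨j, hj, hmax⟩ := exists_max_image {i ∈ t | dist x i < r i} r ⟨i₀, mem_filter.2 ⟨hi₀, hxi₀⟩⟩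
  obtain ⟨hjt, hxj⟩ := mem_filter.1 hj
  refine ⟨j, hjt, hxj, fun i hit hxi => ?_⟩
  have hrij := hmax i (mem_filter.2 ⟨hit, hxi⟩)
  linarith [dist_triangle_left i j x]

end Balls

theorem lipschitz_eps_selection_general {X : Type*} [MetricSpace X] [CompactSpace X] (m : ℕ)
    (Γ : X → Set (EuclideanSpace ℝ (Fin m)))
    (hne : ∀ x, (Γ x).Nonempty) (hconv : ∀ x, Convex ℝ (Γ x))
    (huhc : ∀ x₀ : X, ∀ V : Set (EuclideanSpace ℝ (Fin m)), IsOpen V → Γ x₀ ⊆ V →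
      ∃ δ > 0, ∀ x : X, dist x x₀ < δ → Γ x ⊆ V) :
    ∀ ε > 0, ∃ g : X → EuclideanSpace ℝ (Fin m), ∃ K : NNReal,
      LipschitzWith K g ∧
      ∀ x : X, ∃ p : X × EuclideanSpace ℝ (Fin m), p.2 ∈ Γ p.1 ∧ dist (x, g x) p ≤ ε := by
  intro ε hε
  have hmod : ∀ x₀, ∃ δ > 0, δ ≤ ε ∧ ∀ x, dist x x₀ < δ → Γ x ⊆ thickening (ε / 2) (Γ x₀) := by
    intro x₀
    obtain ⟨δ, hδ, hΓ⟩ := huhc x₀ _ isOpen_thickening (self_subset_thickening (half_pos hε) _)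
    exact ⟨min δ ε, lt_min hδ hε, min_le_right δ ε,
      fun x hx => hΓ x (hx.trans_le (min_le_left δ ε))⟩
  choose δ hδ hδε hΓ using hmod
  obtain ⟨t, ht⟩ := isCompact_univ.elim_finite_subcover (fun i => ball i (δ i / 2))
    (fun _ => isOpen_ball) fun x _ => Set.mem_iUnion.2 ⟨x, mem_ball_self (half_pos (hδ x))⟩
  have hcover : ∀ x, ∃ i ∈ t, dist x i < δ i / 2 := fun x => by
    simpa using ht (Set.mem_univ x)
  choose y hy using hne
  have hsum : ∀ x, 0 < ∑ i ∈ t, tent i (δ i / 2) x := fun x => sum_tent_pos (hcover x)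
  obtain ⟨K, hK⟩ := (LocallyLipschitz.centerMass (t := t)
    (fun i _ => (lipschitzWith_tent i (δ i / 2)).locallyLipschitz)
    (fun x => (hsum x).ne') y).exists_lipschitzWith
  refine ⟨_, K, hK, fun x => ?_⟩
  obtain ⟨j, -, hxj, hnear⟩ := exists_ball_of_max_radius (hcover x)
  have hgx : t.centerMass (fun i => tent i (δ i / 2) x) y ∈ thickening (ε / 2) (Γ j) :=
    ((hconv j).thickening _).centerMass_mem_of_ne_zero (fun i _ => tent_nonneg i _ x) (hsum x)
      fun i hi hxi => hΓ j i (by linarith [hnear i hi (tent_ne_zero_iff.1 hxi)]) (hy i)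
  obtain ⟨z, hz, hdz⟩ := mem_thickening_iff.1 hgx
  refine ⟨(j, z), hz, ?_⟩
  rw [Prod.dist_eq]
  exact max_le (by linarith [hδε j]) (by linarith)

/-- an upper hemicontinuous set-valued map on a compact metric space
with nonempty convex values in a fixed compact ball admits a Lipschitz ε-selection. -/
theorem lipschitz_eps_selection {X : Type*} [MetricSpace X] [CompactSpace X] (m : ℕ)
    (Γ : X → Set (EuclideanSpace ℝ (Fin m)))
    (hne : ∀ x, (Γ x).Nonempty) (hconv : ∀ x, Convex ℝ (Γ x))
    (R : ℝ) (hbdd : ∀ x, Γ x ⊆ Metric.closedBall 0 R)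
    (huhc : ∀ x₀ : X, ∀ V : Set (EuclideanSpace ℝ (Fin m)), IsOpen V → Γ x₀ ⊆ V →
      ∃ δ > 0, ∀ x : X, dist x x₀ < δ → Γ x ⊆ V) :
    ∀ ε > 0, ∃ g : X → EuclideanSpace ℝ (Fin m), ∃ K : NNReal,
      LipschitzWith K g ∧
      ∀ x : X, ∃ p : X × EuclideanSpace ℝ (Fin m), p.2 ∈ Γ p.1 ∧ dist (x, g x) p ≤ ε :=
  lipschitz_eps_selection_general m Γ hne hconv huhc
end

section
/- Let f : X × U → ℝ be a parameterized convex continuous function, where X ⊂ ℝ^n is compact and U ⊂ ℝ^m is compact convex. Then for every ε > 0 there exist I ∈ ℕ and continuous functions a_i : X → ℝ^m, b_i : X → ℝ (i = 1,…,I) such that sup_{(x,u) ∈ X × U} | max_{1≤i≤I}(⟨a_i(x), u⟩ + b_i(x)) − f(x,u) | < ε. -/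
open scoped RealInnerProductSpace

/-!
Extend `f` continuously to the whole space. For a continuous linear functional `ℓ`, the
parametric conjugate `c_ℓ(x) = sup_{v ∈ U} (ℓ v - f x v)` is continuous in `x` because `U` is
compact, and `u ↦ ℓ u - c_ℓ(x)` is an affine minorant of `f x` on `U`. Separating a point below
the epigraph of `f x₀` by Hahn–Banach gives, at every `(x₀, u₀)`, a slope `ℓ` whose minorant is
`ε/2`-close to `f` at `(x₀, u₀)`, hence `ε`-close on a neighbourhood. Compactness of `X × U`
leaves finitely many slopes, and the maximum of their minorants is the required network.
-/

open Set Function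

universe u v

theorem IsClosed.exists_continuous_eqOn {X : Type u} {Y : Type v} [TopologicalSpace X]
    [NormalSpace X] [TopologicalSpace Y] [TietzeExtension.{u, v} Y] {K : Set X} (hK : IsClosed K)
    {f : X → Y} (hf : ContinuousOn f K) : ∃ g : X → Y, Continuous g ∧ EqOn g f K := by
  obtain ⟨g, hg⟩ := ContinuousMap.exists_restrict_eq hK ⟨K.domRestrict f, hf.domRestrict⟩
  exact ⟨g, g.continuous, fun x hx => ContinuousMap.congr_fun hg ⟨x, hx⟩⟩

theorem Finset.exists_fin_succ_subset_range {β : Type*} [Nonempty β] (s : Finset β) :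
    ∃ I : ℕ, ∃ a : Fin (I + 1) → β, ↑s ⊆ Set.range a := by
  refine ⟨s.toList.length, (Classical.arbitrary β :: s.toList).get, fun b hb => ?_⟩
  obtain ⟨i, hi⟩ := List.mem_iff_get.1 (List.mem_cons_of_mem _ (Finset.mem_toList.2 hb))
  exact ⟨i, hi⟩

theorem Finset.abs_sup'_sub_lt {ι : Type*} {s : Finset ι} (hs : s.Nonempty) {φ : ι → ℝ}
    {y ε : ℝ} (hle : ∀ i ∈ s, φ i ≤ y) (hlt : ∃ i ∈ s, y - ε < φ i) :
    |s.sup' hs φ - y| < ε := by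
  obtain ⟨i, hi, hiy⟩ := hlt
  have hsup_le : s.sup' hs φ ≤ y := Finset.sup'_le hs φ hle
  have hle_sup : φ i ≤ s.sup' hs φ := Finset.le_sup' φ hi
  have hφi := hle i hi
  rw [abs_sub_lt_iff]
  constructor <;> linarith

section Conjugate

variable {E : Type*} [AddCommGroup E] [Module ℝ E] [TopologicalSpace E]

/-- The Fenchel conjugate of `g` restricted to `U`: `u ↦ ℓ u - conjugateOn U g ℓ` is the largest
affine minorant of `g` on `U` with linear part `ℓ`. -/
noncomputable def conjugateOn (U : Set E) (g : E → ℝ) (ℓ : E →L[ℝ] ℝ) : ℝ :=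
  sSup ((fun v => ℓ v - g v) '' U)

theorem sub_le_conjugateOn {U : Set E} (hU : IsCompact U) {g : E → ℝ} (hg : ContinuousOn g U)
    (ℓ : E →L[ℝ] ℝ) {u : E} (hu : u ∈ U) : ℓ u - g u ≤ conjugateOn U g ℓ :=
  le_csSup (hU.bddAbove_image (ℓ.continuous.continuousOn.sub hg)) (mem_image_of_mem _ hu)

theorem continuous_conjugateOn {α : Type*} [TopologicalSpace α] {U : Set E} (hU : IsCompact U)
    {g : α → E → ℝ} (hg : Continuous ↿g) (ℓ : E →L[ℝ] ℝ) :
    Continuous fun x => conjugateOn U (g x) ℓ :=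
  hU.continuous_sSup (f := fun x v => ℓ v - g x v) ((ℓ.continuous.comp continuous_snd).sub hg)

theorem ConvexOn.exists_conjugateOn_le [IsTopologicalAddGroup E] [ContinuousSMul ℝ E]
    [LocallyConvexSpace ℝ E] {U : Set E} {g : E → ℝ} (hconv : ConvexOn ℝ U g) (hU : IsClosed U)
    (hg : LowerSemicontinuousOn g U) {u₀ : E} (hu₀ : u₀ ∈ U) {δ : ℝ} (hδ : 0 < δ) :
    ∃ ℓ : E →L[ℝ] ℝ, conjugateOn U g ℓ ≤ ℓ u₀ - g u₀ + δ := by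
  obtain ⟨ℓ, c, hle, heq⟩ :=
    hconv.exists_affine_le_of_lt (𝕜 := ℝ) hu₀ (sub_lt_self (g u₀) hδ) hU hg
  refine ⟨ℓ, csSup_le (Nonempty.image _ ⟨u₀, hu₀⟩) ?_⟩
  rintro _ ⟨v, hv, rfl⟩
  have hℓv := hle ⟨v, hv⟩
  simp only [Pi.add_apply, domRestrict_apply, comp_apply, RCLike.re_to_real, const_apply]
    at hℓv heq
  linarith

theorem exists_finset_sub_conjugateOn_approx [IsTopologicalAddGroup E] [ContinuousSMul ℝ E]
    [LocallyConvexSpace ℝ E] [T2Space E] {α : Type*} [TopologicalSpace α] {X : Set α}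
    (hX : IsCompact X) {U : Set E} (hU : IsCompact U) {g : α → E → ℝ} (hg : Continuous ↿g)
    (hconv : ∀ x ∈ X, ConvexOn ℝ U (g x)) {ε : ℝ} (hε : 0 < ε) :
    ∃ L : Finset (E →L[ℝ] ℝ), ∀ x ∈ X, ∀ u ∈ U,
      ∃ ℓ ∈ L, g x u - ε < ℓ u - conjugateOn U (g x) ℓ := by
  set V : (E →L[ℝ] ℝ) → Set (α × E) :=
    fun ℓ => {p | g p.1 p.2 - ε < ℓ p.2 - conjugateOn U (g p.1) ℓ}
  have hV : ∀ ℓ, IsOpen (V ℓ) := fun ℓ =>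
    isOpen_lt (hg.sub continuous_const)
      ((ℓ.continuous.comp continuous_snd).sub
        ((continuous_conjugateOn hU hg ℓ).comp continuous_fst))
  have hcover : X ×ˢ U ⊆ ⋃ ℓ, V ℓ := by
    rintro ⟨x, u⟩ ⟨hx, hu⟩
    have hgx : Continuous (g x) := hg.comp (Continuous.prodMk_right x)
    obtain ⟨ℓ, hℓ⟩ := (hconv x hx).exists_conjugateOn_le hU.isClosed
      (hgx.lowerSemicontinuous.lowerSemicontinuousOn U) hu (half_pos hε)
    exact mem_iUnion.2 ⟨ℓ, show g x u - ε < ℓ u - conjugateOn U (g x) ℓ by linarith⟩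
  obtain ⟨L, hL⟩ := (hX.prod hU).elim_finite_subcover V hV hcover
  refine ⟨L, fun x hx u hu => ?_⟩
  simpa [V] using hL (mk_mem_prod hx hu)

end Conjugate

theorem pma_universal_approximation_general (n m : ℕ)
    (X : Set (EuclideanSpace ℝ (Fin n))) (U : Set (EuclideanSpace ℝ (Fin m)))
    (hX : IsCompact X) (hU : IsCompact U)
    (f : EuclideanSpace ℝ (Fin n) → EuclideanSpace ℝ (Fin m) → ℝ)
    (hf : ContinuousOn (fun p : EuclideanSpace ℝ (Fin n) × EuclideanSpace ℝ (Fin m) =>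
      f p.1 p.2) (X ×ˢ U))
    (hconv : ∀ x ∈ X, ConvexOn ℝ U (f x)) :
    ∀ ε > 0, ∃ I : ℕ,
      ∃ a : Fin (I + 1) → EuclideanSpace ℝ (Fin n) → EuclideanSpace ℝ (Fin m),
      ∃ b : Fin (I + 1) → EuclideanSpace ℝ (Fin n) → ℝ,
      (∀ i, Continuous (a i)) ∧ (∀ i, Continuous (b i)) ∧
      ∀ x ∈ X, ∀ u ∈ U,
        |Finset.univ.sup' Finset.univ_nonempty (fun i => ⟪a i x, u⟫ + b i x) - f x u| < ε := by
  intro ε hε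
  obtain ⟨G, hG, hGf⟩ := (hX.prod hU).isClosed.exists_continuous_eqOn hf
  have hGconv : ∀ x ∈ X, ConvexOn ℝ U (curry G x) := fun x hx =>
    (hconv x hx).congr fun u hu => (hGf (mk_mem_prod hx hu)).symm
  obtain ⟨L, hL⟩ := exists_finset_sub_conjugateOn_approx hX hU hG hGconv hε
  obtain ⟨I, ℓ, hℓ⟩ := L.exists_fin_succ_subset_range
  refine ⟨I, fun i _ => (InnerProductSpace.toDual ℝ _).symm (ℓ i),
    fun i x => -conjugateOn U (curry G x) (ℓ i), fun _ => continuous_const,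
    fun i => (continuous_conjugateOn hU hG (ℓ i)).neg, fun x hx u hu => ?_⟩
  have hGx : ContinuousOn (curry G x) U := (hG.comp (Continuous.prodMk_right x)).continuousOn
  simp only [InnerProductSpace.toDual_symm_apply, ← sub_eq_add_neg]
  rw [show f x u = curry G x u from (hGf (mk_mem_prod hx hu)).symm]
  refine Finset.abs_sup'_sub_lt _ (fun i _ => ?_) ?_
  · linarith [sub_le_conjugateOn hU hGx (ℓ i) hu]
  · obtain ⟨ℓ₀, hℓ₀L, hlt⟩ := hL x hx u hu
    obtain ⟨i, rfl⟩ := hℓ hℓ₀L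
    exact ⟨i, Finset.mem_univ i, hlt⟩

/-- PMA networks are parameterized convex universal approximators. -/
theorem pma_universal_approximation (n m : ℕ)
    (X : Set (EuclideanSpace ℝ (Fin n))) (U : Set (EuclideanSpace ℝ (Fin m)))
    (hX : IsCompact X) (hU : IsCompact U) (hUconv : Convex ℝ U)
    (f : EuclideanSpace ℝ (Fin n) → EuclideanSpace ℝ (Fin m) → ℝ)
    (hf : ContinuousOn (fun p : EuclideanSpace ℝ (Fin n) × EuclideanSpace ℝ (Fin m) =>
      f p.1 p.2) (X ×ˢ U))
    (hconv : ∀ x ∈ X, ConvexOn ℝ U (f x)) :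
    ∀ ε > 0, ∃ I : ℕ,
      ∃ a : Fin (I + 1) → EuclideanSpace ℝ (Fin n) → EuclideanSpace ℝ (Fin m),
      ∃ b : Fin (I + 1) → EuclideanSpace ℝ (Fin n) → ℝ,
      (∀ i, Continuous (a i)) ∧ (∀ i, Continuous (b i)) ∧
      ∀ x ∈ X, ∀ u ∈ U,
        |Finset.univ.sup' Finset.univ_nonempty (fun i => ⟪a i x, u⟫ + b i x) - f x u| < ε :=
  pma_universal_approximation_general n m X U hX hU f hf hconv
end

section
/- Let f : X × U → ℝ be a parameterized convex continuous function on compact X ⊂ ℝ^n and compact convex U ⊂ ℝ^m. Then for every ε > 0 there exist T̄ > 0 such that for all T ∈ (0, T̄) there exist I ∈ ℕ and continuous functions a_i : X → ℝ^m, b_i : X → ℝ with sup_{(x,u)} | T·log(∑_{i=1}^I exp((⟨a_i(x),u⟩ + b_i(x))/T)) − f(x,u) | < ε. -/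
open scoped RealInnerProductSpace

/-!
A function continuous on `X × U` and convex in `u` is, up to `ε`, the pointwise maximum of
finitely many functions `⟪vᵢ, u⟫ + bᵢ x` with continuous `bᵢ`: at a point `q = (x₀, u₀)` take an
affine minorant of `f x₀` that is `ε`-close at `u₀`, and subtract a multiple `C · dist x x₀` steep
enough to keep it below `f + ε` everywhere; each such piece is `ε`-close to `f` near `q`, so
compactness selects finitely many. Finally `T log ∑ᵢ exp (zᵢ / T)` lies between `maxᵢ zᵢ` and
`maxᵢ zᵢ + T log I`, which is within `ε` of the maximum for small `T`.
-/

open Filter Topology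

section LogSumExp

variable {ι : Type*} [Fintype ι]

lemma le_mul_log_sum_exp_div (z : ι → ℝ) {T : ℝ} (hT : 0 < T) (i : ι) :
    z i ≤ T * Real.log (∑ j, Real.exp (z j / T)) := by
  have hsum : Real.exp (z i / T) ≤ ∑ j, Real.exp (z j / T) :=
    Finset.single_le_sum (f := fun j => Real.exp (z j / T)) (fun j _ => (Real.exp_pos _).le)
      (Finset.mem_univ i)
  have hlog : z i / T ≤ Real.log (∑ j, Real.exp (z j / T)) :=
    (Real.le_log_iff_exp_le (lt_of_lt_of_le (Real.exp_pos _) hsum)).2 hsum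
  rwa [div_le_iff₀' hT] at hlog

lemma mul_log_sum_exp_div_le [Nonempty ι] {z : ι → ℝ} {c T : ℝ} (hT : 0 < T)
    (hz : ∀ i, z i ≤ c) :
    T * Real.log (∑ j, Real.exp (z j / T)) ≤ c + T * Real.log (Fintype.card ι) := by
  have hcard : (0 : ℝ) < Fintype.card ι := by exact_mod_cast Fintype.card_pos
  have hsum : ∑ j, Real.exp (z j / T) ≤ Fintype.card ι * Real.exp (c / T) := by
    simpa using Finset.sum_le_card_nsmul Finset.univ _ _ fun j _ =>
      Real.exp_le_exp.2 (div_le_div_of_nonneg_right (hz j) hT.le)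
  have hlog : Real.log (∑ j, Real.exp (z j / T)) ≤ Real.log (Fintype.card ι) + c / T := by
    calc Real.log (∑ j, Real.exp (z j / T))
        ≤ Real.log (Fintype.card ι * Real.exp (c / T)) :=
          Real.log_le_log (Finset.sum_pos (fun j _ => Real.exp_pos _) Finset.univ_nonempty) hsum
      _ = Real.log (Fintype.card ι) + c / T := by
          rw [Real.log_mul hcard.ne' (Real.exp_ne_zero _), Real.log_exp]
  calc T * Real.log (∑ j, Real.exp (z j / T))
      ≤ T * (Real.log (Fintype.card ι) + c / T) := mul_le_mul_of_nonneg_left hlog hT.le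
    _ = c + T * Real.log (Fintype.card ι) := by field_simp; ring

end LogSumExp

lemma IsCompact.exists_le_add_mul_dist {Y : Type*} [PseudoMetricSpace Y] {K : Set Y}
    (hK : IsCompact K) {g : Y → ℝ} (hg : ContinuousOn g K) {ε : ℝ} (hε : 0 < ε) :
    ∃ C, ∀ p ∈ K, ∀ q ∈ K, g p ≤ g q + ε + C * dist p q := by
  obtain ⟨δ, hδ, hgδ⟩ :=
    Metric.uniformContinuousOn_iff.1 (hK.uniformContinuousOn_of_continuous hg) ε hε
  obtain ⟨M, hM⟩ := hK.exists_bound_of_continuousOn hg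
  refine ⟨2 * M / δ, fun p hp q hq => ?_⟩
  have hMp := abs_le.1 (hM p hp)
  have hMq := abs_le.1 (hM q hq)
  rcases lt_or_ge (dist p q) δ with hpq | hpq
  · have hclose := (abs_lt.1 (hgδ p hp q hq hpq)).2
    have : 0 ≤ 2 * M / δ * dist p q := by
      have : 0 ≤ M := (norm_nonneg _).trans (hM p hp)
      positivity
    linarith
  · have : 2 * M ≤ 2 * M / δ * dist p q := by
      rw [div_mul_eq_mul_div, le_div_iff₀ hδ]
      nlinarith [(norm_nonneg _).trans (hM p hp)]
    linarith

lemma ConvexOn.exists_inner_add_le_of_lt {F : Type*} [NormedAddCommGroup F]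
    [InnerProductSpace ℝ F] [CompleteSpace F] {s : Set F} {g : F → ℝ} {x : F} {a : ℝ}
    (hx : x ∈ s) (hax : a < g x) (hs : IsClosed s) (hg : LowerSemicontinuousOn g s)
    (hgc : ConvexOn ℝ s g) :
    ∃ (v : F) (c : ℝ), (∀ y ∈ s, ⟪v, y⟫ + c ≤ g y) ∧ ⟪v, x⟫ + c = a := by
  obtain ⟨l, c, hle, heq⟩ := hgc.exists_affine_le_of_lt (𝕜 := ℝ) hx hax hs hg
  refine ⟨(InnerProductSpace.toDual ℝ F).symm l, c, fun y hy => ?_, ?_⟩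
  · simpa [InnerProductSpace.toDual_symm_apply] using hle ⟨y, hy⟩
  · simpa [InnerProductSpace.toDual_symm_apply] using heq

section AffineApproximation

variable {α F : Type*} [PseudoMetricSpace α] [NormedAddCommGroup F] [InnerProductSpace ℝ F]
  [CompleteSpace F] {X : Set α} {U : Set F} {f : α → F → ℝ}

lemma exists_inner_add_le_add_and_eventually_lt (hK : IsCompact (X ×ˢ U)) (hU : IsClosed U)
    (hf : ContinuousOn (fun p : α × F => f p.1 p.2) (X ×ˢ U))
    (hconv : ∀ x ∈ X, ConvexOn ℝ U (f x)) {ε : ℝ} (hε : 0 < ε) {q : α × F}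
    (hq : q ∈ X ×ˢ U) :
    ∃ (v : F) (b : α → ℝ), Continuous b ∧ (∀ x ∈ X, ∀ u ∈ U, ⟪v, u⟫ + b x ≤ f x u + ε) ∧
      ∀ᶠ p in 𝓝[X ×ˢ U] q, f p.1 p.2 - ε < ⟪v, p.2⟫ + b p.1 := by
  obtain ⟨C, hC⟩ := hK.exists_le_add_mul_dist hf hε
  have hfq : ContinuousOn (f q.1) U :=
    hf.comp (Continuous.prodMk_right q.1).continuousOn fun u hu => ⟨hq.1, hu⟩
  obtain ⟨v, c, hvc, hvcq⟩ := (hconv q.1 hq.1).exists_inner_add_le_of_lt hq.2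
    (sub_lt_self _ (half_pos hε)) hU hfq.lowerSemicontinuousOn
  have hb : Continuous fun x => c - C * dist x q.1 :=
    continuous_const.sub (continuous_const.mul (continuous_id.dist continuous_const))
  refine ⟨v, fun x => c - C * dist x q.1, hb, fun x hx u hu => ?_, ?_⟩
  · have hdist : dist (q.1, u) (x, u) = dist x q.1 := by
      simp [Prod.dist_eq, dist_comm]
    have hfx := hC (q.1, u) ⟨hq.1, hu⟩ (x, u) ⟨hx, hu⟩
    rw [hdist] at hfx
    linarith [hvc u hu]
  · refine (hf q hq).sub continuousWithinAt_const |>.eventually_lt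
      (((continuous_const.inner continuous_snd).add (hb.comp continuous_fst)).continuousWithinAt)
      ?_
    show f q.1 q.2 - ε < ⟪v, q.2⟫ + (c - C * dist q.1 q.1)
    rw [dist_self, mul_zero, sub_zero, hvcq]
    linarith

lemma exists_finite_inner_add_approx (hK : IsCompact (X ×ˢ U)) (hU : IsClosed U)
    (hf : ContinuousOn (fun p : α × F => f p.1 p.2) (X ×ˢ U))
    (hconv : ∀ x ∈ X, ConvexOn ℝ U (f x)) {ε : ℝ} (hε : 0 < ε) :
    ∃ (k : ℕ) (v : Fin k → F) (b : Fin k → α → ℝ), (∀ i, Continuous (b i)) ∧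
      ∀ x ∈ X, ∀ u ∈ U, (∀ i, ⟪v i, u⟫ + b i x ≤ f x u + ε) ∧
        ∃ i, f x u - ε < ⟪v i, u⟫ + b i x := by
  choose! v b hb hle hlt using
    fun q (hq : q ∈ X ×ˢ U) => exists_inner_add_le_add_and_eventually_lt hK hU hf hconv hε hq
  obtain ⟨t, htK, hcover⟩ := hK.elim_nhdsWithin_subcover _ hlt
  let e := t.equivFin.symm
  refine ⟨t.card, fun i => v (e i), fun i => b (e i), fun i => hb _ (htK _ (e i).2),
    fun x hx u hu => ⟨fun i => hle _ (htK _ (e i).2) x hx u hu, ?_⟩⟩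
  obtain ⟨q, hqt, hq⟩ := Set.mem_iUnion₂.1 (hcover (Set.mk_mem_prod hx hu))
  exact ⟨t.equivFin ⟨q, hqt⟩, by simpa [e] using hq⟩

end AffineApproximation

theorem plse_universal_approximation_general (n m : ℕ)
    (X : Set (EuclideanSpace ℝ (Fin n))) (U : Set (EuclideanSpace ℝ (Fin m)))
    (hX : IsCompact X) (hU : IsCompact U)
    (f : EuclideanSpace ℝ (Fin n) → EuclideanSpace ℝ (Fin m) → ℝ)
    (hf : ContinuousOn (fun p : EuclideanSpace ℝ (Fin n) × EuclideanSpace ℝ (Fin m) =>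
      f p.1 p.2) (X ×ˢ U))
    (hconv : ∀ x ∈ X, ConvexOn ℝ U (f x)) :
    ∀ ε > 0, ∃ Tbar > (0 : ℝ), ∀ T : ℝ, 0 < T → T < Tbar →
      ∃ I : ℕ,
      ∃ a : Fin (I + 1) → EuclideanSpace ℝ (Fin n) → EuclideanSpace ℝ (Fin m),
      ∃ b : Fin (I + 1) → EuclideanSpace ℝ (Fin n) → ℝ,
      (∀ i, Continuous (a i)) ∧ (∀ i, Continuous (b i)) ∧
      ∀ x ∈ X, ∀ u ∈ U,
        |T * Real.log (∑ i : Fin (I + 1), Real.exp ((⟪a i x, u⟫ + b i x) / T)) - f x u| < ε := by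
  intro ε hε
  obtain ⟨k, v, b, hb, hvb⟩ :=
    exists_finite_inner_add_approx (hX.prod hU) hU.isClosed hf hconv (half_pos hε)
  cases k with
  | zero =>
    exact ⟨1, one_pos, fun _ _ _ => ⟨0, fun _ _ => 0, fun _ _ => 0, fun _ => continuous_const,
      fun _ => continuous_const, fun x hx u hu => (hvb x hx u hu).2.elim fun i _ => i.elim0⟩⟩
  | succ I =>
    have hL : 0 ≤ Real.log (I + 1) := Real.log_nonneg (by simp)
    refine ⟨ε / 2 / (Real.log (I + 1) + 1), by positivity, fun T hT hTbar =>
      ⟨I, fun i _ => v i, b, fun _ => continuous_const, hb, fun x hx u hu => ?_⟩⟩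
    obtain ⟨hle, i, hlt⟩ := hvb x hx u hu
    have hTL : T * Real.log (I + 1) < ε / 2 := by
      rw [lt_div_iff₀ (by positivity)] at hTbar
      nlinarith
    have hlower := le_mul_log_sum_exp_div (fun j => ⟪v j, u⟫ + b j x) hT i
    have hupper := mul_log_sum_exp_div_le hT hle
    simp only [Fintype.card_fin, Nat.cast_add, Nat.cast_one] at hupper
    rw [abs_lt]
    constructor <;> linarith

/-- PLSE networks are parameterized convex universal approximators. -/
theorem plse_universal_approximation (n m : ℕ)
    (X : Set (EuclideanSpace ℝ (Fin n))) (U : Set (EuclideanSpace ℝ (Fin m)))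
    (hX : IsCompact X) (hU : IsCompact U) (hUconv : Convex ℝ U)
    (f : EuclideanSpace ℝ (Fin n) → EuclideanSpace ℝ (Fin m) → ℝ)
    (hf : ContinuousOn (fun p : EuclideanSpace ℝ (Fin n) × EuclideanSpace ℝ (Fin m) =>
      f p.1 p.2) (X ×ˢ U))
    (hconv : ∀ x ∈ X, ConvexOn ℝ U (f x)) :
    ∀ ε > 0, ∃ Tbar > (0 : ℝ), ∀ T : ℝ, 0 < T → T < Tbar →
      ∃ I : ℕ,
      ∃ a : Fin (I + 1) → EuclideanSpace ℝ (Fin n) → EuclideanSpace ℝ (Fin m),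
      ∃ b : Fin (I + 1) → EuclideanSpace ℝ (Fin n) → ℝ,
      (∀ i, Continuous (a i)) ∧ (∀ i, Continuous (b i)) ∧
      ∀ x ∈ X, ∀ u ∈ U,
        |T * Real.log (∑ i : Fin (I + 1), Real.exp ((⟪a i x, u⟫ + b i x) / T)) - f x u| < ε :=
  plse_universal_approximation_general n m X U hX hU f hf hconv
end
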